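/- arXiv:1105.4284 — 3 statements merged into one kernel-verified Lean document; each statement's English description precedes it below -/
import Mathlib

section
/- Every finite-dimensional anisotropic Lie algebra over a field of characteristic zero is reductive. -/
open Module

/-- A Lie algebra is *anisotropic* if for every `x` the adjoint endomorphism `ad x` is
semisimple, i.e. every `ad x`-invariant subspace admits an `ad x`-invariant complement. -/
def IsAnisotropic (K L : Type*) [Field K] [LieRing L] [LieAlgebra K L] : Prop :=
  ∀ x : L, ∀ p : Submodule K L, p.map (LieAlgebra.ad K L x) ≤ p →
    ∃ q : Submodule K L, q.map (LieAlgebra.ad K L x) ≤ q ∧ IsCompl p q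

/-- A Lie algebra is *reductive* if its solvable radical coincides with its center. -/
def IsReductive (K L : Type*) [Field K] [LieRing L] [LieAlgebra K L] : Prop :=
  LieAlgebra.radical K L = LieAlgebra.center K L

/-- A Lie algebra is *minimal nonabelian* if it is not abelian but every proper Lie
subalgebra of it is abelian. -/
def IsMinimalNonabelian (K L : Type*) [Field K] [LieRing L] [LieAlgebra K L] : Prop :=
  ¬ IsLieAbelian L ∧ ∀ S : LieSubalgebra K L, S ≠ ⊤ → IsLieAbelian S

/-- A Lie algebra is *regular* if every nonzero element is a regular element, i.e. the
coefficient of `T ^ (rank K L)` in the characteristic polynomial of `ad x` is nonzero. -/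
def IsRegularLieAlgebra (K L : Type*) [Field K] [LieRing L] [LieAlgebra K L]
    [Module.Finite K L] : Prop :=
  ∀ x : L, x ≠ 0 → LieAlgebra.IsRegular K x

/-- A Lie algebra has *depth 2* if it is neither abelian nor minimal nonabelian, and every
proper Lie subalgebra of it is abelian or minimal nonabelian. -/
def HasDepthTwo (K L : Type*) [Field K] [LieRing L] [LieAlgebra K L] : Prop :=
  ¬ IsLieAbelian L ∧ ¬ IsMinimalNonabelian K L ∧
    ∀ S : LieSubalgebra K L, S ≠ ⊤ → IsLieAbelian S ∨ IsMinimalNonabelian K S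

/-!
An endomorphism that is both semisimple and nilpotent vanishes, so in an anisotropic Lie
algebra every `x` with `ad x` nilpotent is central. If `I` is an ideal with `⁅I, I⁆` central
and `x ∈ I`, then `(ad x)³ y = ⁅x, ⁅x, ⁅x, y⁆⁆⁆ = 0`, hence `I` is central. Descending the
derived series of the radical, which ends at `⊥`, shows that the radical is central.
-/

open LieAlgebra

section

variable {K L : Type*} [CommRing K] [LieRing L] [LieAlgebra K L]

lemma LieIdeal.ad_pow_three_eq_zero_of_lie_le_center {I : LieIdeal K L}
    (hI : ⁅I, I⁆ ≤ center K L) {x : L} (hx : x ∈ I) : ad K L x ^ 3 = 0 := by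
  ext y
  have hxy : ⁅x, y⁆ ∈ I := by rw [← lie_skew]; exact neg_mem (I.lie_mem hx)
  have hxxy : ⁅x, ⁅x, y⁆⁆ ∈ center K L := hI (LieSubmodule.lie_mem_lie hx hxy)
  simpa [pow_succ] using (LieModule.mem_maxTrivSubmodule K L L _).mp hxxy x

lemma mem_center_of_ad_eq_zero {x : L} (hx : ad K L x = 0) : x ∈ center K L := by
  rw [LieModule.mem_maxTrivSubmodule]
  intro y
  rw [← lie_skew, ← ad_apply (R := K), hx, LinearMap.zero_apply, neg_zero]

end

namespace IsAnisotropic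

variable {K L : Type*} [Field K] [LieRing L] [LieAlgebra K L]

lemma isSemisimple_ad (h : IsAnisotropic K L) (x : L) : (ad K L x).IsSemisimple :=
  Module.End.isSemisimple_iff.mpr fun p hp ↦ by
    obtain ⟨q, hq, hpq⟩ := h x p ((Module.End.mem_invtSubmodule_iff_map_le _).mp hp)
    exact ⟨q, (Module.End.mem_invtSubmodule_iff_map_le _).mpr hq, hpq⟩

lemma mem_center_of_isNilpotent_ad (h : IsAnisotropic K L) {x : L}
    (hx : IsNilpotent (ad K L x)) : x ∈ center K L :=
  mem_center_of_ad_eq_zero <|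
    Module.End.eq_zero_of_isNilpotent_isSemisimple hx (h.isSemisimple_ad x)

lemma le_center_of_lie_le_center (h : IsAnisotropic K L) {I : LieIdeal K L}
    (hI : ⁅I, I⁆ ≤ center K L) : I ≤ center K L := fun _ hx ↦
  h.mem_center_of_isNilpotent_ad ⟨3, LieIdeal.ad_pow_three_eq_zero_of_lie_le_center hI hx⟩

lemma le_center_of_isSolvable (h : IsAnisotropic K L) (I : LieIdeal K L) [IsSolvable I] :
    I ≤ center K L := by
  obtain ⟨n, hn⟩ := IsSolvable.solvable K I
  have hbot : derivedSeriesOfIdeal K L n I = ⊥ := (LieIdeal.derivedSeries_eq_bot_iff I n).mp hn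
  have hD (k : ℕ) (hk : k ≤ n) : derivedSeriesOfIdeal K L k I ≤ center K L :=
    Nat.decreasingInduction (motive := fun k _ ↦ derivedSeriesOfIdeal K L k I ≤ center K L)
      (fun k _ hk ↦ h.le_center_of_lie_le_center (by rwa [derivedSeriesOfIdeal_succ] at hk))
      (hbot ▸ bot_le) hk
  simpa using hD 0 n.zero_le

end IsAnisotropic

theorem anisotropic_isReductive_general (K L : Type*) [Field K]
    [LieRing L] [LieAlgebra K L] [Module.Finite K L]
    (h : IsAnisotropic K L) : IsReductive K L :=
  le_antisymm (h.le_center_of_isSolvable _) (center_le_radical K L)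

theorem anisotropic_isReductive (K L : Type*) [Field K] [CharZero K]
    [LieRing L] [LieAlgebra K L] [Module.Finite K L]
    (h : IsAnisotropic K L) : IsReductive K L :=
  anisotropic_isReductive_general K L h
end

section
/- Let L be a finite-dimensional regular Lie algebra over a field of characteristic zero. If L is not semisimple, then L is nilpotent. -/
open Module

/-!
A non-semisimple Lie algebra has a nonzero abelian ideal `I`, and `ad a` is nilpotent for every
`a ∈ I` since `(ad a)² L ⊆ ⁅I, I⁆ = 0`. The characteristic polynomial of a nilpotent `ad a` is
`T ^ dim L`, so regularity of `a` forces `rk L = dim L`. Since the trailing degree of the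
characteristic polynomial of every `ad x` is at least `rk L`, every `ad x` is then nilpotent,
and `L` is nilpotent by Engel's theorem.
-/

namespace LieIdeal

variable {R L : Type*} [CommRing R] [LieRing L] [LieAlgebra R L]

lemma ad_sq_eq_zero_of_mem (I : LieIdeal R L) [IsLieAbelian I] {a : L} (ha : a ∈ I) :
    LieAlgebra.ad R L a ^ 2 = 0 := by
  ext y
  have hay : ⁅a, y⁆ ∈ I := lie_mem_left R L I a y ha
  have h : ⁅(⟨a, ha⟩ : I), (⟨⁅a, y⁆, hay⟩ : I)⁆ = 0 := trivial_lie_zero _ _ _ _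
  simpa [sq] using congrArg Subtype.val h

end LieIdeal

namespace LieAlgebra

section CommRing

variable (R L : Type*) [CommRing R] [LieRing L] [LieAlgebra R L]

lemma exists_ne_zero_isNilpotent_ad_of_radical_ne_bot (h : radical R L ≠ ⊥) :
    ∃ a : L, a ≠ 0 ∧ IsNilpotent (ad R L a) := by
  obtain ⟨I, hI, hI_ne⟩ : ∃ I : LieIdeal R L, IsLieAbelian I ∧ I ≠ ⊥ := by
    by_contra! hno
    exact h ((hasTrivialRadical_iff_no_abelian_ideals R L).mpr hno).radical_eq_bot
  obtain ⟨a, haI, ha⟩ := Submodule.exists_mem_ne_zero_of_ne_bot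
    ((LieSubmodule.toSubmodule_eq_bot I).not.mpr hI_ne)
  exact ⟨a, ha, 2, I.ad_sq_eq_zero_of_mem haI⟩

end CommRing

variable (R : Type*) {L : Type*} [CommRing R] [IsDomain R] [LieRing L] [LieAlgebra R L]
  [Module.Free R L] [Module.Finite R L] [IsNoetherian R L]

lemma rank_eq_finrank_of_isRegular_of_isNilpotent_ad {x : L} (hreg : IsRegular R x)
    (hnil : IsNilpotent (ad R L x)) : rank R L = finrank R L := by
  rw [← (isRegular_iff_natTrailingDegree_charpoly_eq_rank R x).mp hreg]
  exact ((LinearMap.charpoly_nilpotent_tfae _).out 0 3).mp hnil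

lemma isNilpotent_of_rank_eq_finrank (h : rank R L = finrank R L) : LieRing.IsNilpotent L := by
  rw [isNilpotent_iff_forall (R := R)]
  intro x
  refine ((LinearMap.charpoly_nilpotent_tfae _).out 0 3).mpr (le_antisymm ?_ ?_)
  · exact (Polynomial.natTrailingDegree_le_natDegree _).trans (LinearMap.charpoly_natDegree _).le
  · exact h.ge.trans (rank_le_natTrailingDegree_charpoly_ad R x)

end LieAlgebra

theorem regular_not_semisimple_isNilpotent_general (K L : Type*) [Field K]
    [LieRing L] [LieAlgebra K L] [Module.Finite K L]
    (hreg : IsRegularLieAlgebra K L)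
    (hss : LieAlgebra.radical K L ≠ ⊥) :
    LieRing.IsNilpotent L := by
  obtain ⟨a, ha, hnil⟩ := LieAlgebra.exists_ne_zero_isNilpotent_ad_of_radical_ne_bot K L hss
  exact LieAlgebra.isNilpotent_of_rank_eq_finrank K
    (LieAlgebra.rank_eq_finrank_of_isRegular_of_isNilpotent_ad K (hreg a ha) hnil)

theorem regular_not_semisimple_isNilpotent (K L : Type*) [Field K] [CharZero K]
    [LieRing L] [LieAlgebra K L] [Module.Finite K L]
    (hreg : IsRegularLieAlgebra K L)
    (hss : LieAlgebra.radical K L ≠ ⊥) :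
    LieRing.IsNilpotent L :=
  regular_not_semisimple_isNilpotent_general K L hreg hss
end

section
/- Let L be a finite-dimensional Lie algebra of depth 2 over a field of characteristic zero which is neither solvable nor semisimple. Then the solvable radical of L is abelian. -/
open Module

/-!
The radical `R` is a proper ideal because `L` is not solvable. For `x ∉ R` the subspace
`R + K x` is a subalgebra, and it is proper: otherwise `[L, L] ⊆ R`, which would make `L`
solvable. So `R` lies strictly inside a proper subalgebra, which by depth two is abelian or
minimal nonabelian; either way `R` is abelian.
-/

namespace LieIdeal

variable {K L : Type*} [CommRing K] [LieRing L] [LieAlgebra K L]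

def supSpanSingleton (I : LieIdeal K L) (x : L) : LieSubalgebra K L :=
  { (K ∙ x) ⊔ (I : LieSubalgebra K L).toSubmodule with
    lie_mem' := LieSubalgebra.lie_mem_sup_of_mem_normalizer (by simp) }

lemma mem_supSpanSingleton_self (I : LieIdeal K L) (x : L) : x ∈ I.supSpanSingleton x :=
  Submodule.mem_sup_left (Submodule.mem_span_singleton_self x)

lemma le_supSpanSingleton (I : LieIdeal K L) (x : L) :
    (I : LieSubalgebra K L) ≤ I.supSpanSingleton x :=
  fun _ hy ↦ Submodule.mem_sup_right hy

lemma derivedSeries_one_le_of_span_sup_eq_top {I : LieIdeal K L} {x : L}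
    (h : (K ∙ x) ⊔ (I : Submodule K L) = ⊤) : LieAlgebra.derivedSeries K L 1 ≤ I := by
  rw [LieAlgebra.derivedSeries_def, LieAlgebra.derivedSeriesOfIdeal_succ,
    LieAlgebra.derivedSeriesOfIdeal_zero, LieSubmodule.lie_le_iff]
  rintro y - z -
  obtain ⟨s, u, hu, rfl⟩ := LieSubmodule.exists_smul_add_of_span_sup_eq_top h y
  obtain ⟨t, v, hv, rfl⟩ := LieSubmodule.exists_smul_add_of_span_sup_eq_top h z
  simp only [add_lie, lie_add, smul_lie, lie_smul, lie_self, smul_zero, zero_add]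
  exact add_mem (I.smul_mem t (lie_mem_left K L I u x hu))
    (add_mem (I.smul_mem s (lie_mem_right K L I x v hv)) (lie_mem_left K L I u v hu))

end LieIdeal

namespace LieAlgebra

variable {K L : Type*} [CommRing K] [LieRing L] [LieAlgebra K L]

lemma isSolvable_of_derivedSeries_one_le {I : LieIdeal K L} [IsSolvable I]
    (h : derivedSeries K L 1 ≤ I) : IsSolvable L := by
  obtain ⟨k, hk⟩ := IsSolvable.solvable (R := K) (L := I)
  rw [LieIdeal.derivedSeries_eq_bot_iff] at hk
  refine IsSolvable.mk (R := K) (k := k + 1) (le_bot_iff.mp ?_)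
  calc derivedSeries K L (k + 1)
      = derivedSeriesOfIdeal K L k (derivedSeries K L 1) := derivedSeriesOfIdeal_add ⊤ k 1
    _ ≤ derivedSeriesOfIdeal K L k I := derivedSeriesOfIdeal_mono h k
    _ = ⊥ := hk

end LieAlgebra

section DepthTwo

variable {K L : Type*} [Field K] [LieRing L] [LieAlgebra K L]

lemma IsMinimalNonabelian.isLieAbelian_of_lt {H H' : LieSubalgebra K L} (hH : H < H')
    (hH' : IsMinimalNonabelian K H') : IsLieAbelian H := by
  have hne : LieSubalgebra.ofLe hH.le ≠ ⊤ := by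
    obtain ⟨x, hxH', hxH⟩ := SetLike.exists_of_lt hH
    intro htop
    exact hxH ((LieSubalgebra.mem_ofLe hH.le ⟨x, hxH'⟩).mp (htop ▸ LieSubalgebra.mem_top _))
  exact (LieSubalgebra.equivOfLe hH.le).injective.isLieAbelian (hH'.2 _ hne)

lemma HasDepthTwo.isLieAbelian_of_lt {H H' : LieSubalgebra K L} (hL : HasDepthTwo K L)
    (hH : H < H') (hH' : H' ≠ ⊤) : IsLieAbelian H := by
  rcases hL.2.2 H' hH' with hab | hmin
  · exact (LieSubalgebra.inclusion_injective hH.le).isLieAbelian hab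
  · exact hmin.isLieAbelian_of_lt hH

end DepthTwo

theorem depthTwo_radical_abelian_general (K L : Type*) [Field K]
    [LieRing L] [LieAlgebra K L] [Module.Finite K L]
    (hd2 : HasDepthTwo K L)
    (hnsolv : ¬ LieAlgebra.IsSolvable L) :
    IsLieAbelian (LieAlgebra.radical K L) := by
  set R := LieAlgebra.radical K L
  obtain ⟨x, hx⟩ : ∃ x : L, x ∉ R := by
    by_contra! h
    exact hnsolv (LieAlgebra.isSolvable_of_derivedSeries_one_le (I := R) fun y _ ↦ h y)
  have hS : R.supSpanSingleton x ≠ ⊤ := fun h ↦ hnsolv <|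
    LieAlgebra.isSolvable_of_derivedSeries_one_le <|
      LieIdeal.derivedSeries_one_le_of_span_sup_eq_top <|
        (LieSubalgebra.toSubmodule_eq_top _).mpr h
  have hRS : (R : LieSubalgebra K L) < R.supSpanSingleton x :=
    lt_of_le_of_ne (R.le_supSpanSingleton x)
      fun h ↦ hx (show x ∈ (R : LieSubalgebra K L) from h ▸ R.mem_supSpanSingleton_self x)
  exact hd2.isLieAbelian_of_lt hRS hS

theorem depthTwo_radical_abelian (K L : Type*) [Field K] [CharZero K]
    [LieRing L] [LieAlgebra K L] [Module.Finite K L]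
    (hd2 : HasDepthTwo K L)
    (hnsolv : ¬ LieAlgebra.IsSolvable L)
    (hnss : LieAlgebra.radical K L ≠ ⊥) :
    IsLieAbelian (LieAlgebra.radical K L) :=
  depthTwo_radical_abelian_general K L hd2 hnsolv
end
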